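/- Let X be a metrizable space. Then X is a J-space if and only if every closed continuous map f : X → Y onto a non-compact metrizable space Y is perfect. -/

import Mathlib

/-- A Hausdorff space `X` is a *J-space* if whenever `A`, `B` are closed sets with
`A ∪ B = X` and `A ∩ B` compact, then `A` or `B` is compact. -/
def IsJSpace (X : Type*) [TopologicalSpace X] : Prop :=
  ∀ A B : Set X, IsClosed A → IsClosed B → A ∪ B = Set.univ →
    IsCompact (A ∩ B) → IsCompact A ∨ IsCompact B

/-- A Hausdorff space `X` is a *strong J-space* if every compact `K ⊆ X` is contained in
a compact `L ⊆ X` with `X \ L` connected (the empty set counting as connected). -/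
def IsStrongJSpace (X : Type*) [TopologicalSpace X] : Prop :=
  ∀ K : Set X, IsCompact K → ∃ L : Set X, IsCompact L ∧ K ⊆ L ∧ IsPreconnected Lᶜ

/-- A map is *perfect* if it is closed and all fibers are compact. -/
def IsPerfectMap {X Y : Type*} [TopologicalSpace X] [TopologicalSpace Y] (f : X → Y) : Prop :=
  IsClosedMap f ∧ ∀ y : Y, IsCompact (f ⁻¹' {y})

/-- A map is *boundary-perfect* if it is closed and the topological boundary of each
fiber is compact. -/
def IsBoundaryPerfectMap {X Y : Type*} [TopologicalSpace X] [TopologicalSpace Y]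
    (f : X → Y) : Prop :=
  IsClosedMap f ∧ ∀ y : Y, IsCompact (frontier (f ⁻¹' {y}))

/-!
Let `f : X → Y` be closed. By Vainstein's lemma every fibre `F = f⁻¹(y)` has compact frontier, so
`X = F ∪ closure Fᶜ` is a splitting along a compact set, and in a J-space one of the two pieces is
compact. If it were `closure Fᶜ`, then `Y = {y} ∪ f (closure Fᶜ)` would be compact.

Conversely, let `X = A ∪ B` with `A ∩ B` compact and `A`, `B` both non-compact. Since
`frontier A ⊆ A ∩ B` is compact, the quotient `X/A` is metrizable: the distance of `x ∉ A` to the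
collapsed point is its distance to a compact set `K ⊇ frontier A`. The quotient map is closed and
has the non-compact fibre `A`, while `X/A` is not compact because `B` maps onto it with compact
fibres.
-/

open Set Filter Topology TopologicalSpace Uniformity Metric

theorem mapClusterPt_atTop_of_mem_closure_range {X : Type*} [TopologicalSpace X] [T1Space X]
    {z : ℕ → X} {p : X} (hp : p ∈ closure (range z)) (hpz : p ∉ range z) :
    MapClusterPt p atTop z := by
  rw [mapClusterPt_atTop_iff_forall_mem_closure]
  intro i
  rw [← image_univ, ← Iio_union_Ici, image_union, closure_union,
    ((finite_Iio i).image z).isClosed.closure_eq] at hp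
  exact hp.resolve_left fun h => hpz (image_subset_range _ _ h)

/-- Vainstein's lemma. A sequence in `frontier (f ⁻¹' {y})` without cluster points is pushed off
the fibre to a sequence `z` with `f ∘ z → y`; as `f` is closed, `z` must accumulate on the fibre,
and then so does the original sequence. -/
theorem isBoundaryPerfectMap_of_isClosedMap {X Y : Type*} [TopologicalSpace X]
    [MetrizableSpace X] [TopologicalSpace Y] [FirstCountableTopology Y] [T1Space Y]
    {f : X → Y} (hf : Continuous f) (hcl : IsClosedMap f) : IsBoundaryPerfectMap f := by
  let := pseudoMetrizableSpaceUniformity X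
  have := pseudoMetrizableSpaceUniformity_countably_generated X
  refine ⟨hcl, fun y => ?_⟩
  set F := f ⁻¹' {y}
  by_contra hnc
  rw [isCompact_iff_isSeqCompact, IsSeqCompact] at hnc
  push Not at hnc
  obtain ⟨x, hxF, hx⟩ := hnc
  obtain ⟨U, hU⟩ := (𝓝 y).exists_antitone_basis
  obtain ⟨V, hV⟩ := (𝓤 X).exists_antitone_basis
  have hz : ∀ n, ∃ z, z ∉ F ∧ (z, x n) ∈ V n ∧ f z ∈ U n := by
    intro n
    have hfx : f (x n) = y := (isClosed_singleton.preimage hf).frontier_subset (hxF n)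
    have hnhds : {z | (z, x n) ∈ V n} ∩ f ⁻¹' U n ∈ 𝓝 (x n) :=
      inter_mem (mem_nhds_right _ (hV.mem n)) (hf.continuousAt.preimage_mem_nhds (hfx ▸ hU.mem n))
    obtain ⟨z, ⟨hzV, hzU⟩, hzF⟩ :=
      mem_closure_iff_nhds.1 (frontier_subset_closure (frontier_compl F ▸ hxF n)) _ hnhds
    exact ⟨z, hzF, hzV, hzU⟩
  choose z hzF hzV hzU using hz
  obtain ⟨p, hp, hpy⟩ : y ∈ f '' closure (range z) :=
    hcl.closure_image_subset _ <| mem_closure_of_tendsto (hU.tendsto hzU) <|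
      Eventually.of_forall fun n => mem_image_of_mem f (mem_range_self n)
  obtain ⟨φ, hφ, hzφ⟩ := (mapClusterPt_atTop_of_mem_closure_range hp
    (by rintro ⟨n, rfl⟩; exact hzF n hpy)).tendsto_subseq
  have hxφ : Tendsto (x ∘ φ) atTop (𝓝 p) :=
    hzφ.congr_uniformity ((hV.tendsto hzV).comp hφ.tendsto_atTop)
  exact hx p (isClosed_frontier.mem_of_tendsto hxφ (Eventually.of_forall fun n => hxF _)) φ hφ hxφ

theorem IsJSpace.isCompact_or_isCompact_closure_compl {X : Type*} [TopologicalSpace X]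
    (hJ : IsJSpace X) {F : Set X} (hF : IsClosed F) (hfr : IsCompact (frontier F)) :
    IsCompact F ∨ IsCompact (closure Fᶜ) := by
  refine hJ F _ hF isClosed_closure ?_ ?_
  · exact eq_univ_of_forall fun x => (em (x ∈ F)).imp_right fun hx => subset_closure hx
  · rwa [frontier_eq_closure_inter_closure, hF.closure_eq] at hfr

theorem IsJSpace.isPerfectMap_of_isBoundaryPerfectMap {X Y : Type*} [TopologicalSpace X]
    [TopologicalSpace Y] [T1Space Y] (hJ : IsJSpace X) {f : X → Y} (hf : Continuous f)
    (hsurj : Function.Surjective f) (hY : ¬CompactSpace Y) (h : IsBoundaryPerfectMap f) :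
    IsPerfectMap f := by
  refine ⟨h.1, fun y => ?_⟩
  set F := f ⁻¹' {y}
  refine (hJ.isCompact_or_isCompact_closure_compl (isClosed_singleton.preimage hf)
    (h.2 y)).resolve_right fun hc => hY ⟨?_⟩
  refine ((isCompact_singleton (x := y)).union (hc.image hf)).of_isClosed_subset isClosed_univ
    fun u _ => ?_
  obtain ⟨x, rfl⟩ := hsurj u
  exact (em (x ∈ F)).imp id fun hx => mem_image_of_mem f (subset_closure hx)

theorem IsClosed.isCompact_of_isClosedMap {X Y : Type*} [TopologicalSpace X] [TopologicalSpace Y]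
    [CompactSpace Y] {B : Set X} (hB : IsClosed B) {f : X → Y} (hf : Continuous f)
    (hcl : IsClosedMap f) (hfib : ∀ y, IsCompact (B ∩ f ⁻¹' {y})) : IsCompact B := by
  have hg : IsProperMap (f ∘ Subtype.val : B → Y) := by
    refine isProperMap_iff_isClosedMap_and_compact_fibers.2
      ⟨hf.comp continuous_subtype_val, hcl.comp hB.isClosedMap_subtype_val, fun y => ?_⟩
    rw [Subtype.isCompact_iff, preimage_comp, Subtype.image_preimage_coe]
    exact hfib y
  rw [isCompact_iff_isCompact_univ]
  exact hg.isCompact_preimage isCompact_univ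

/-- The quotient `X/A`, with `A` collapsed to `pt`. The set `K` only enters through the metric. -/
inductive Collapse {X : Type*} (A _K : Set X) : Type _
  | pt : Collapse A _K
  | of : ↥Aᶜ → Collapse A _K

namespace Collapse

variable {X : Type*} {A K : Set X}

variable (A K) in
open scoped Classical in
noncomputable def mk (x : X) : Collapse A K := if h : x ∈ A then pt else of ⟨x, h⟩

theorem mk_of_mem {x : X} (hx : x ∈ A) : mk A K x = pt := dif_pos hx

theorem mk_of_notMem {x : X} (hx : x ∉ A) : mk A K x = of ⟨x, hx⟩ := dif_neg hx

theorem mk_eq_pt_iff {x : X} : mk A K x = pt ↔ x ∈ A := by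
  by_cases hx : x ∈ A <;> simp [mk, hx]

theorem mk_eq_of_iff {x : X} {z : ↥Aᶜ} : mk A K x = of z ↔ x = z := by
  by_cases hx : x ∈ A
  · rw [mk_of_mem hx]
    exact iff_of_false nofun (by rintro rfl; exact z.2 hx)
  · simp [mk_of_notMem hx, Subtype.ext_iff]

theorem preimage_mk_pt : mk A K ⁻¹' {pt} = A := ext fun _ => mk_eq_pt_iff

theorem mk_surjective (hA : A.Nonempty) : Function.Surjective (mk A K) := by
  rintro (_ | z)
  · exact ⟨hA.some, mk_of_mem hA.some_mem⟩
  · exact ⟨z, mk_eq_of_iff.2 rfl⟩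

theorem isCompact_inter_preimage_mk [TopologicalSpace X] {B : Set X} (hAB : IsCompact (B ∩ A))
    (u : Collapse A K) : IsCompact (B ∩ mk A K ⁻¹' {u}) := by
  rcases u with _ | z
  · rwa [preimage_mk_pt]
  · refine (subsingleton_singleton (a := (z : X))).anti ?_ |>.isCompact
    exact fun x hx => mk_eq_of_iff.1 hx.2

variable [MetricSpace X]

/-- Distances to `pt` are measured to `K`, not to `A`: a point near `A` but far from `K` must not be
near `pt`, as it can be separated from `A` by an open set. -/
noncomputable instance : PseudoMetricSpace (Collapse A K) where
  dist u v := match u, v with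
    | pt, pt => 0
    | pt, of z | of z, pt => infDist (z : X) K
    | of z, of w => min (dist z w) (infDist (z : X) K + infDist (w : X) K)
  dist_self u := by cases u <;> simp [infDist_nonneg]
  dist_comm u v := by cases u <;> cases v <;> simp [dist_comm, add_comm]
  dist_triangle u v w := by
    have hD (z w : ↥Aᶜ) : infDist (z : X) K ≤ infDist (w : X) K + dist z w :=
      infDist_le_infDist_add_dist
    have h0 (z : ↥Aᶜ) : 0 ≤ infDist (z : X) K := infDist_nonneg
    rcases u with _ | a <;> rcases v with _ | b <;> rcases w with _ | c <;> simp only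
    case of.of.of => grind [dist_triangle a b c, hD a b, hD c b, dist_comm c b]
    all_goals grind [= dist_comm]

theorem dist_pt_of (z : ↥Aᶜ) : dist (pt : Collapse A K) (of z) = infDist (z : X) K := rfl

theorem dist_of_of (z w : ↥Aᶜ) :
    dist (of z : Collapse A K) (of w) = min (dist z w) (infDist (z : X) K + infDist (w : X) K) :=
  rfl

theorem infDist_pos (hK : IsClosed K) (hK₀ : K.Nonempty) (hKA : K ⊆ A) (z : ↥Aᶜ) :
    0 < infDist (z : X) K :=
  (hK.notMem_iff_infDist_pos hK₀).1 fun hz => z.2 (hKA hz)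

theorem t0Space (hK : IsClosed K) (hK₀ : K.Nonempty) (hKA : K ⊆ A) : T0Space (Collapse A K) := by
  refine (t0Space_iff_inseparable _).2 fun u v huv => ?_
  rw [Metric.inseparable_iff] at huv
  have hpos := infDist_pos hK hK₀ hKA
  rcases u with _ | z <;> rcases v with _ | w
  · rfl
  · exact absurd huv (hpos w).ne'
  · rw [dist_comm] at huv
    exact absurd huv (hpos z).ne'
  · rw [dist_of_of, min_eq_iff] at huv
    rcases huv with ⟨h, -⟩ | ⟨h, -⟩
    · rw [dist_eq_zero.1 h]
    · linarith [hpos z, hpos w]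

theorem continuous_mk (hA : IsClosed A) (hAK : frontier A ⊆ K) : Continuous (mk A K) := by
  refine continuous_iff_continuousAt.2 fun x => ?_
  suffices h : ∀ᶠ y in 𝓝 x, dist (mk A K y) (mk A K x) ≤ dist y x by
    obtain ⟨r, hr, hball⟩ := Metric.eventually_nhds_iff.1 h
    exact continuousAt_of_locally_lipschitz hr 1 fun y hy => by simpa using hball hy
  by_cases hxA : x ∈ A
  · rw [mk_of_mem hxA]
    by_cases hxK : x ∈ K
    · refine Eventually.of_forall fun y => ?_
      by_cases hyA : y ∈ A
      · simp [mk_of_mem hyA]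
      · rw [mk_of_notMem hyA, dist_comm, dist_pt_of]
        exact infDist_le_dist_of_mem hxK
    · have hx : x ∈ interior A := by
        by_contra h
        exact hxK (hAK ⟨subset_closure hxA, h⟩)
      filter_upwards [isOpen_interior.mem_nhds hx] with y hy
      simp [mk_of_mem (interior_subset hy)]
  · filter_upwards [hA.isOpen_compl.mem_nhds hxA] with y hy
    rw [mk_of_notMem hxA, mk_of_notMem hy, dist_of_of]
    exact min_le_left _ _

theorem isClosedMap_mk (hK : IsCompact K) (hK₀ : K.Nonempty) (hKA : K ⊆ A) :
    IsClosedMap (mk A K) := by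
  refine isClosedMap_iff_kernImage.2 fun {U} hU => Metric.isOpen_iff.2 ?_
  rintro (_ | z) hu
  · have hAU : A ⊆ U := fun x hx => hu (mk_of_mem hx)
    obtain ⟨δ, hδ, hδU⟩ := hK.exists_thickening_subset_open hU (hKA.trans hAU)
    refine ⟨δ, hδ, ?_⟩
    rintro (_ | w) hw x hx
    · exact hAU (mk_eq_pt_iff.1 hx)
    · rw [mem_ball, dist_comm, dist_pt_of] at hw
      rw [mk_eq_of_iff.1 hx]
      exact hδU ((mem_thickening_iff_infDist_lt hK₀).2 hw)
  · obtain ⟨r, hr, hrU⟩ := Metric.isOpen_iff.1 hU z (hu (mk_eq_of_iff.2 rfl))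
    have hz := infDist_pos hK.isClosed hK₀ hKA z
    refine ⟨min r (infDist (z : X) K), lt_min hr hz, ?_⟩
    rintro (_ | w) hw x hx
    · rw [mem_ball, dist_pt_of] at hw
      exact absurd hw (not_lt.2 (min_le_right _ _))
    · rw [mk_eq_of_iff.1 hx]
      rw [mem_ball, dist_of_of] at hw
      have hwz : dist w z < min r (infDist (z : X) K) := by
        by_contra! h
        exact hw.not_ge (le_min h ((min_le_right _ _).trans (le_add_of_nonneg_left infDist_nonneg)))
      exact hrU (mem_ball.2 (hwz.trans_le (min_le_left _ _)))

end Collapse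

/-- A metrizable space `X` is a J-space iff every closed map from `X` onto a non-compact
metrizable space is perfect. -/
theorem metrizable_isJSpace_iff_closedMap_onto_noncompact_perfect (X : Type u)
    [TopologicalSpace X] [TopologicalSpace.MetrizableSpace X] :
    IsJSpace X ↔
      ∀ (Y : Type u) [TopologicalSpace Y] [TopologicalSpace.MetrizableSpace Y],
        ¬CompactSpace Y → ∀ f : X → Y, Continuous f → Function.Surjective f →
          IsClosedMap f → IsPerfectMap f := by
  refine ⟨fun hJ Y _ _ hY f hf hsurj hcl => IsJSpace.isPerfectMap_of_isBoundaryPerfectMap hJ hf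
    hsurj hY (isBoundaryPerfectMap_of_isClosedMap hf hcl), fun h A B hA hB hAB hK => ?_⟩
  by_contra! hnc
  let := metrizableSpaceMetric X
  obtain ⟨a, ha⟩ : A.Nonempty := nonempty_iff_ne_empty.2 fun hA₀ => hnc.1 (hA₀ ▸ isCompact_empty)
  -- the point `a` only makes `K` nonempty, as `infDist` to `∅` is `0`
  set K := insert a (A ∩ B)
  have hKA : K ⊆ A := insert_subset ha inter_subset_left
  have hAK : frontier A ⊆ K := by
    have hB' : closure Aᶜ ⊆ B := hB.closure_subset_iff.2 (compl_subset_iff_union.2 hAB)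
    rw [frontier_eq_closure_inter_closure, hA.closure_eq]
    exact fun x hx => mem_insert_of_mem a ⟨hx.1, hB' hx.2⟩
  have := Collapse.t0Space (hK.insert a).isClosed (insert_nonempty a _) hKA
  have hcont := Collapse.continuous_mk hA hAK
  have hcl := Collapse.isClosedMap_mk (hK.insert a) (insert_nonempty a _) hKA
  have hY : ¬CompactSpace (Collapse A K) := fun _ => hnc.2 <| hB.isCompact_of_isClosedMap hcont hcl
    (Collapse.isCompact_inter_preimage_mk (inter_comm A B ▸ hK))
  have hperf := h _ hY _ hcont (Collapse.mk_surjective ⟨a, ha⟩) hcl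
  exact hnc.1 (by simpa only [Collapse.preimage_mk_pt] using hperf.2 .pt)
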